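/- Let K be a finite field of cardinality q and characteristic p, let n ≥ 0, and let F ∈ K[x_0, …, x_n] be homogeneous of degree n+1, defining a degree-(n+1) hypersurface X in ℙ^n over K. Then the number of projective zeros of F in ℙ(K^{n+1}) is NOT congruent to 1 modulo p if and only if the coefficient of the monomial (x_0 x_1 ⋯ x_n)^{q−1} in F^{q−1} is nonzero in K. -/

import Mathlib

/-!
Since `a ^ (q - 1)` is `0` at `a = 0` and `1` elsewhere, the sum of `F(x) ^ (q - 1)` over
`K^(n+1)` is minus the number of affine zeros of `F`. These are the origin together with `q - 1`
representatives of each of the `N` projective zeros, so the sum is `N - 1` in `K`. On the other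
hand, summing a monomial `x^d` over `K^(n+1)` gives `∏ᵢ ∑ₐ a ^ dᵢ`, which vanishes as soon as some
`dᵢ < q - 1`. Since `F ^ (q - 1)` has degree `(n + 1)(q - 1)`, only `(x₀ ⋯ xₙ) ^ (q - 1)` survives,
and it contributes `(-1) ^ (n + 1)` times its coefficient.
-/

open MvPolynomial Finset
open scoped LinearAlgebra.Projectivization

namespace FiniteField

variable {K : Type*} [Field K] [Fintype K]

theorem pow_card_sub_one_eq_ite (a : K) [Decidable (a = 0)] :
    a ^ (Fintype.card K - 1) = if a = 0 then 0 else 1 := by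
  split_ifs with ha
  · rw [ha, zero_pow (Nat.sub_ne_zero_of_lt Fintype.one_lt_card)]
  · exact pow_card_sub_one_eq_one a ha

theorem sum_pow_card_sub_one : ∑ a : K, a ^ (Fintype.card K - 1) = -1 := by
  classical
  simp_rw [pow_card_sub_one_eq_ite, sum_ite, sum_const_zero, zero_add, sum_const, nsmul_one,
    filter_ne', card_erase_of_mem (mem_univ _), card_univ, Nat.cast_pred Fintype.card_pos,
    cast_card_eq_zero, zero_sub]

end FiniteField

theorem Finsupp.exists_lt_of_degree_le_of_ne {σ : Type*} [Fintype σ] {d : σ →₀ ℕ} {m : ℕ}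
    (hd : d.degree ≤ m * Fintype.card σ) (hne : d ≠ equivFunOnFinite.symm fun _ => m) :
    ∃ i, d i < m := by
  by_contra! hge
  refine hne (Finsupp.ext fun i => ?_)
  have hsum : ∑ i, d i ≤ ∑ _i : σ, m := by
    simpa [degree_eq_sum, mul_comm] using hd
  exact ((Finset.sum_eq_sum_iff_of_le fun i _ => hge i).mp
    (le_antisymm (Finset.sum_le_sum fun i _ => hge i) hsum) i (mem_univ i)).symm

theorem Nat.card_subtype_eq_card_subtype_ne_add_one {α : Type*} [Finite α] {p : α → Prop}
    {a : α} (ha : p a) : Nat.card {x // p x} = Nat.card {x // x ≠ a ∧ p x} + 1 := by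
  have e : {x // x ≠ a ∧ p x} ≃ ↥({x | p x} \ {a}) :=
    Equiv.subtypeEquivRight fun x => by simp [and_comm]
  rw [Nat.card_congr e, Nat.card_coe_set_eq, Set.ncard_sdiff_singleton_add_one (s := {x | p x}) ha]
  rfl

theorem Projectivization.natCard_subtype_ne_zero_and_eq_mul {k V : Type*} [DivisionRing k]
    [AddCommGroup V] [Module k V] (Z : V → Prop) (hZ : ∀ (c : kˣ) v, Z (c • v) ↔ Z v) :
    Nat.card {v : V // v ≠ 0 ∧ Z v} =
      Nat.card {P : ℙ k V // ∀ v (hv : v ≠ 0), mk k v hv = P → Z v} * Nat.card kˣ := by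
  rw [← Nat.card_prod]
  refine Nat.card_congr <| (Equiv.subtypeSubtypeEquivSubtypeInter (· ≠ 0) Z).symm.trans <|
    (Equiv.subtypeEquiv (nonZeroEquivProjectivizationProdUnits k V) fun w => ?_).trans
      Equiv.prodSubtypeFstEquivSubtypeProd
  refine ⟨fun hw v hv hvw => ?_, fun h => h w w.2 rfl⟩
  obtain ⟨a, rfl⟩ := (mk_eq_mk_iff k v w hv w.2).mp hvw
  exact (hZ a w).2 hw

namespace MvPolynomial

section Homogeneous

variable {R σ : Type*} [Fintype σ] {m : ℕ}

theorem IsHomogeneous.eval_smul [CommSemiring R] {F : MvPolynomial σ R} (hF : F.IsHomogeneous m)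
    (c : R) (x : σ → R) : eval (c • x) F = c ^ m * eval x F := by
  rw [eval_eq', eval_eq', mul_sum]
  refine sum_congr rfl fun d hd => ?_
  have hdeg : ∑ i, d i = m := by
    rw [← Finsupp.degree_eq_sum, Finsupp.degree_eq_weight_one]
    exact hF (mem_support_iff.mp hd)
  simp_rw [Pi.smul_apply, smul_eq_mul, mul_pow, prod_mul_distrib, prod_pow_eq_pow_sum, hdeg]
  ring

theorem IsHomogeneous.eval_zero_of_ne_zero [CommSemiring R] {F : MvPolynomial σ R}
    (hF : F.IsHomogeneous m) (hm : m ≠ 0) : eval 0 F = 0 := by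
  simpa [zero_pow hm] using hF.eval_smul 0 0

theorem IsHomogeneous.natCard_zeros_eq [Field R] [Finite R] {F : MvPolynomial σ R}
    (hF : F.IsHomogeneous m) (hm : m ≠ 0) :
    Nat.card {x : σ → R // eval x F = 0} =
      Nat.card {P : ℙ R (σ → R) // ∀ v (hv : v ≠ 0), Projectivization.mk R v hv = P →
        eval v F = 0} * (Nat.card R - 1) + 1 := by
  rw [Nat.card_subtype_eq_card_subtype_ne_add_one (p := fun x => eval x F = 0)
      (hF.eval_zero_of_ne_zero hm),
    Projectivization.natCard_subtype_ne_zero_and_eq_mul (k := R) _ fun c v => ?_,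
    Nat.card_units]
  rw [Units.smul_def, hF.eval_smul, mul_eq_zero, or_iff_right (pow_ne_zero _ c.ne_zero)]

end Homogeneous

variable {K σ : Type*} [Field K] [Fintype K] [Fintype σ] [DecidableEq σ]

theorem sum_eval_eq_neg_one_pow_mul_coeff (f : MvPolynomial σ K)
    (h : f.totalDegree ≤ (Fintype.card K - 1) * Fintype.card σ) :
    ∑ x, eval x f = (-1) ^ Fintype.card σ *
      coeff (Finsupp.equivFunOnFinite.symm fun _ => Fintype.card K - 1) f := by
  set d₀ : σ →₀ ℕ := Finsupp.equivFunOnFinite.symm fun _ => Fintype.card K - 1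
  have h_monomial (d : σ →₀ ℕ) : ∑ x : σ → K, coeff d f * ∏ i, x i ^ d i =
      coeff d f * ∏ i, ∑ a : K, a ^ d i := by
    rw [← mul_sum, Fintype.prod_sum]
  calc ∑ x, eval x f = ∑ d ∈ f.support, ∑ x : σ → K, coeff d f * ∏ i, x i ^ d i := by
        simp only [eval_eq']; exact sum_comm
    _ = ∑ d ∈ f.support, coeff d f * ∏ i, ∑ a : K, a ^ d i := by simp only [h_monomial]
    _ = coeff d₀ f * ∏ i, ∑ a : K, a ^ d₀ i := by
        refine sum_eq_single d₀ (fun d hd hne => ?_) (fun hd => ?_)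
        · obtain ⟨i, hi⟩ :=
            Finsupp.exists_lt_of_degree_le_of_ne ((le_totalDegree hd).trans h) hne
          rw [prod_eq_zero (mem_univ i) (FiniteField.sum_pow_lt_card_sub_one K _ hi), mul_zero]
        · rw [notMem_support_iff.mp hd, zero_mul]
    _ = (-1) ^ Fintype.card σ * coeff d₀ f := by
        simp [d₀, FiniteField.sum_pow_card_sub_one, mul_comm]

theorem sum_eval_pow_card_sub_one [Nonempty σ] (f : MvPolynomial σ K) :
    ∑ x, eval x (f ^ (Fintype.card K - 1)) = -(Nat.card {x : σ → K // eval x f = 0} : K) := by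
  classical
  have h_card : (Nat.card {x : σ → K // eval x f = 0} : K) + #{x | eval x f ≠ 0} = 0 := by
    rw [Nat.card_eq_fintype_card, Fintype.card_subtype, ← Nat.cast_add,
      card_filter_add_card_filter_not, card_univ, Fintype.card_fun, Nat.cast_pow,
      FiniteField.cast_card_eq_zero, zero_pow Fintype.card_ne_zero]
  simp_rw [map_pow, FiniteField.pow_card_sub_one_eq_ite, sum_ite, sum_const_zero, zero_add,
    sum_const, nsmul_one]
  linear_combination h_card

theorem IsHomogeneous.natCast_card_projective_zeros_sub_one {F : MvPolynomial σ K} {m : ℕ}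
    (hF : F.IsHomogeneous m) (hm0 : m ≠ 0) (hm : m ≤ Fintype.card σ) :
    (Nat.card {P : ℙ K (σ → K) // ∀ v (hv : v ≠ 0), Projectivization.mk K v hv = P →
        eval v F = 0} : K) - 1 =
      (-1) ^ Fintype.card σ * coeff (Finsupp.equivFunOnFinite.symm fun _ => Fintype.card K - 1)
        (F ^ (Fintype.card K - 1)) := by
  have : Nonempty σ := Fintype.card_pos_iff.mp (by omega)
  have h_deg : (F ^ (Fintype.card K - 1)).totalDegree ≤ (Fintype.card K - 1) * Fintype.card σ :=
    (hF.pow _).totalDegree_le.trans (by rw [mul_comm]; gcongr)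
  rw [← sum_eval_eq_neg_one_pow_mul_coeff _ h_deg, sum_eval_pow_card_sub_one,
    hF.natCard_zeros_eq hm0, Nat.card_eq_fintype_card (α := K)]
  push_cast [Nat.cast_pred Fintype.card_pos, FiniteField.cast_card_eq_zero]
  ring

end MvPolynomial

/-- Criterion for a degree-(n+1) hypersurface `X = V(F)` in `ℙ^n` over a finite field
`K` of cardinality `q` and characteristic `p`: `|X(K)| ≢ 1 (mod p)` if and only if the
coefficient of `(x_0 ⋯ x_n)^(q-1)` in `F^(q-1)` is nonzero. -/
theorem projective_point_count_not_modeq_one_iff_coeff_ne_zero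
    {K : Type*} [Field K] [Fintype K] (p : ℕ) [CharP K p]
    (n : ℕ) (F : MvPolynomial (Fin (n + 1)) K) (hF : F.IsHomogeneous (n + 1)) :
    ¬ (Nat.card {P : Projectivization K (Fin (n + 1) → K) //
        ∀ (v : Fin (n + 1) → K) (hv : v ≠ 0),
          Projectivization.mk K v hv = P → eval v F = 0} ≡ 1 [MOD p]) ↔
      coeff (Finsupp.equivFunOnFinite.symm fun _ : Fin (n + 1) => Fintype.card K - 1)
          (F ^ (Fintype.card K - 1)) ≠ 0 := by
  rw [← CharP.natCast_eq_natCast K p, Nat.cast_one, ← sub_eq_zero,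
    hF.natCast_card_projective_zeros_sub_one n.succ_ne_zero (Fintype.card_fin _).ge]
  simp
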